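/- arXiv:1906.02580 — 2 statements merged into one kernel-verified Lean document; each statement's English description precedes it below -/
import Mathlib

section
/- Let W : X → ℝ≥0 be a function with W(x̄)=0, let μ : X → U be a policy, and let x̃ be the trajectory x̃_{k+1} = f(x̃_k, μ(x̃_k)) from x̃_0 = x_0. Suppose W(x̃_k) → 0 as k → ∞ and for all k, W(x̃_{k+1}) − W(x̃_k) ≤ −c_k · l(x̃_k, μ(x̃_k)) with c_k ∈ (0, c̄]. Then ∑_{k=0}^∞ l(x̃_k, μ(x̃_k)) ≤ V^∞(x_0) + δ_0 − ∑_{k=0}^∞ (Δl)_k, where δ_0 = W(x_0) − V^∞(x_0) and (Δl)_k = (c_k − 1)·l(x̃_k, μ(x̃_k)). -/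
/-!
Along the closed-loop trajectory the decrease condition telescopes: the `c`-weighted
stage costs up to time `n` sum to at most `W x₀ - W (x̃ n) ≤ W x₀`, because `W ≥ 0`.
Hence `∑ c_k l_k ≤ W x₀`, and splitting `c_k l_k = l_k + (c_k - 1) l_k` gives the bound.
-/

open Finset

theorem sum_range_le_sub_of_sub_le_neg {w a : ℕ → ℝ} (h : ∀ k, w (k + 1) - w k ≤ -a k)
    (n : ℕ) : ∑ k ∈ range n, a k ≤ w 0 - w n := by
  have htel : ∑ k ∈ range n, (w (k + 1) - w k) = w n - w 0 := sum_range_sub w n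
  have hle : ∑ k ∈ range n, (w (k + 1) - w k) ≤ ∑ k ∈ range n, -a k :=
    sum_le_sum fun k _ => h k
  rw [htel, sum_neg_distrib] at hle
  linarith

theorem tsum_le_of_nonneg_of_sub_le_neg {w a : ℕ → ℝ} (hw : ∀ k, 0 ≤ w k)
    (h : ∀ k, w (k + 1) - w k ≤ -a k) (ha : Summable a) : ∑' k, a k ≤ w 0 :=
  ha.tsum_le_of_sum_range_le fun n =>
    (sum_range_le_sub_of_sub_le_neg h n).trans (sub_le_self _ (hw n))

theorem stmt0_general {X U : Type*} (l : X → U → ℝ)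
    (W : X → ℝ) (hW : ∀ x, 0 ≤ W x)
    (μ : X → U) (x0 : X) (xt : ℕ → X)
    (hx0 : xt 0 = x0)
    (Vinf : ℝ) (c : ℕ → ℝ)
    (hdecay : ∀ k, W (xt (k + 1)) - W (xt k) ≤ -(c k * l (xt k) (μ (xt k))))
    (hsum : Summable fun k => l (xt k) (μ (xt k)))
    (hsumΔ : Summable fun k => (c k - 1) * l (xt k) (μ (xt k))) :
    ∑' k, l (xt k) (μ (xt k)) ≤
      Vinf + (W x0 - Vinf) - ∑' k, (c k - 1) * l (xt k) (μ (xt k)) := by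
  have hsplit : (fun k => l (xt k) (μ (xt k)) + (c k - 1) * l (xt k) (μ (xt k)))
      = fun k => c k * l (xt k) (μ (xt k)) := by
    ext k; ring
  have hweighted : ∑' k, c k * l (xt k) (μ (xt k)) ≤ W x0 := by
    rw [← hx0]
    exact tsum_le_of_nonneg_of_sub_le_neg (fun k => hW (xt k)) hdecay
      (hsplit ▸ hsum.add hsumΔ)
  rw [← hsplit, hsum.tsum_add hsumΔ] at hweighted
  linarith

theorem stmt0 {X U : Type*} (f : X → U → X) (l : X → U → ℝ)
    (hl : ∀ x u, 0 ≤ l x u)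
    (W : X → ℝ) (hW : ∀ x, 0 ≤ W x)
    (μ : X → U) (x0 : X) (xt : ℕ → X)
    (hx0 : xt 0 = x0)
    (hstep : ∀ k, xt (k + 1) = f (xt k) (μ (xt k)))
    (Vinf : ℝ) (c : ℕ → ℝ) (cbar : ℝ)
    (hc : ∀ k, 0 < c k ∧ c k ≤ cbar)
    (hWlim : Filter.Tendsto (fun k => W (xt k)) Filter.atTop (nhds 0))
    (hdecay : ∀ k, W (xt (k + 1)) - W (xt k) ≤ -(c k * l (xt k) (μ (xt k))))
    (hsum : Summable fun k => l (xt k) (μ (xt k)))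
    (hsumΔ : Summable fun k => (c k - 1) * l (xt k) (μ (xt k))) :
    ∑' k, l (xt k) (μ (xt k)) ≤
      Vinf + (W x0 - Vinf) - ∑' k, (c k - 1) * l (xt k) (μ (xt k)) :=
  stmt0_general l W hW μ x0 xt hx0 Vinf c hdecay hsum hsumΔ
end

section
/- Fix k ∈ ℕ. Suppose the coefficients c_{k+1}(0),…,c_{k+1}(N−1) satisfy the constraint ∑_{i=1}^{N−1} (c_{k+1}(i−1) − c_k(i))·l(x_k*(i), u_k*(i)) + F(f(x_k*(N), μ_F(x_k*(N)))) − F(x_k*(N)) + c_{k+1}(N−1)·l(x_k*(N), μ_F(x_k*(N))) ≤ 0, where (x_k*(·), u_k*(·)) is the minimizer of the finite-horizon problem Ṽ^∞(x_k*, k). Then Ṽ^∞(x_{k+1}*, k+1) − Ṽ^∞(x_k*, k) ≤ −c_k(0)·l(x_k*, u_k*(0)), where x_{k+1}* = f(x_k*, u_k*(0)). -/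
theorem stmt3 {X U : Type*} (f : X → U → X) (l : X → U → ℝ) (F : X → ℝ)
    (Xset Xf : Set X) (Uset : Set U) (μF : X → U) (N : ℕ) (hN : 1 ≤ N)
    (hXf : Xf ⊆ Xset) (hinv : ∀ x ∈ Xf, f x (μF x) ∈ Xf)
    (hμF : ∀ x ∈ Xf, μF x ∈ Uset)
    (c : ℕ → ℕ → ℝ) (k : ℕ)
    (xstar : ℕ → X) (ustar : ℕ → U)
    (hdyn : ∀ i < N, xstar (i + 1) = f (xstar i) (ustar i))
    (hxcon : ∀ i ≤ N, xstar i ∈ Xset) (hucon : ∀ i < N, ustar i ∈ Uset)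
    (hterm : xstar N ∈ Xf)
    (Vk Vk1 : ℝ)
    (hVk : Vk = ∑ i ∈ Finset.range N, c k i * l (xstar i) (ustar i) + F (xstar N))
    (hVk1opt : ∀ (y : ℕ → X) (v : ℕ → U),
      y 0 = f (xstar 0) (ustar 0) →
      (∀ i < N, y (i + 1) = f (y i) (v i)) →
      (∀ i ≤ N, y i ∈ Xset) → (∀ i < N, v i ∈ Uset) → y N ∈ Xf →
      Vk1 ≤ ∑ i ∈ Finset.range N, c (k + 1) i * l (y i) (v i) + F (y N))
    (hconstr : ∑ i ∈ Finset.Ico 1 N, (c (k + 1) (i - 1) - c k i) * l (xstar i) (ustar i)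
      + F (f (xstar N) (μF (xstar N))) - F (xstar N)
      + c (k + 1) (N - 1) * l (xstar N) (μF (xstar N)) ≤ 0) :
    Vk1 - Vk ≤ -(c k 0 * l (xstar 0) (ustar 0)) := by
  obtain ⟨m, rfl⟩ : ∃ m, N = m + 1 := ⟨N - 1, (Nat.succ_pred_eq_of_pos hN).symm⟩
  set y : ℕ → X := fun i => if i < m + 1 then xstar (i + 1) else f (xstar (m + 1)) (μF (xstar (m + 1))) with hy
  set v : ℕ → U := fun i => if i < m then ustar (i + 1) else μF (xstar (m + 1)) with hv
  have hy0 : y 0 = f (xstar 0) (ustar 0) := by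
    simp only [hy, Nat.succ_pos, if_pos]
    simpa using hdyn 0 (Nat.succ_pos m)
  have hyd : ∀ i < m + 1, y (i + 1) = f (y i) (v i) := by
    intro i hi
    rcases lt_or_eq_of_le (Nat.lt_succ_iff.mp hi) with h | h
    · simp only [hy, hv, if_pos (Nat.succ_lt_succ h), if_pos h, if_pos hi]
      exact hdyn (i + 1) (Nat.succ_lt_succ h)
    · subst h
      simp [hy, hv]
  have hyx : ∀ i ≤ m + 1, y i ∈ Xset := by
    intro i hi
    rcases lt_or_eq_of_le hi with h | h
    · simp only [hy, if_pos h]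
      exact hxcon (i + 1) h
    · subst h
      simp only [hy, lt_irrefl, if_neg (lt_irrefl _)]
      exact hXf (hinv _ hterm)
  have hvu : ∀ i < m + 1, v i ∈ Uset := by
    intro i hi
    rcases lt_or_eq_of_le (Nat.lt_succ_iff.mp hi) with h | h
    · simp only [hv, if_pos h]
      exact hucon (i + 1) (Nat.succ_lt_succ h)
    · subst h
      simp only [hv, if_neg (lt_irrefl _)]
      exact hμF _ hterm
  have hyt : y (m + 1) ∈ Xf := by
    simp only [hy, if_neg (lt_irrefl _)]
    exact hinv _ hterm
  have key := hVk1opt y v hy0 hyd hyx hvu hyt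
  set S1 : ℝ := ∑ i ∈ Finset.range m, c (k + 1) i * l (xstar (i + 1)) (ustar (i + 1)) with hS1
  set S0 : ℝ := ∑ i ∈ Finset.range m, c k (i + 1) * l (xstar (i + 1)) (ustar (i + 1)) with hS0
  have hsumy : ∑ i ∈ Finset.range (m + 1), c (k + 1) i * l (y i) (v i)
      = S1 + c (k + 1) m * l (xstar (m + 1)) (μF (xstar (m + 1))) := by
    rw [Finset.sum_range_succ]
    congr 1
    · apply Finset.sum_congr rfl
      intro i hi
      have hi' := Finset.mem_range.mp hi
      simp [hy, hv, if_pos hi', if_pos (Nat.lt_succ_of_lt hi'), hi'.le]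
    · simp [hy, hv]
  have hsumVk : ∑ i ∈ Finset.range (m + 1), c k i * l (xstar i) (ustar i)
      = S0 + c k 0 * l (xstar 0) (ustar 0) := by
    rw [Finset.sum_range_succ']
  have hIco : ∑ i ∈ Finset.Ico 1 (m + 1), (c (k + 1) (i - 1) - c k i) * l (xstar i) (ustar i)
      = S1 - S0 := by
    rw [Finset.sum_Ico_eq_sum_range]
    simp only [Nat.add_sub_cancel]
    rw [hS1, hS0, ← Finset.sum_sub_distrib]
    apply Finset.sum_congr rfl
    intro i hi
    have : 1 + i = i + 1 := Nat.add_comm 1 i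
    rw [this]
    simp only [Nat.add_sub_cancel]
    ring
  have hyN : y (m + 1) = f (xstar (m + 1)) (μF (xstar (m + 1))) := by
    simp [hy]
  rw [hsumy, hyN] at key
  rw [hIco] at hconstr
  simp only [Nat.add_sub_cancel] at hconstr
  rw [hVk, hsumVk]
  linarith
end
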